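/- arXiv:1509.00354 — 6 statements merged into one kernel-verified Lean document; each statement's English description precedes it below -/
import Mathlib

section
/- If ρ + cos(π/n) < 0, then the matrix à = DB, where D is the diagonal matrix with entries k(n-k) for k = 1,…,n-1 and B is the tridiagonal Toeplitz matrix with diagonal ρ and off-diagonals 1/2, has all eigenvalues real and strictly negative. -/
/-!
Write `Ã = D B` with `D` positive diagonal and `B = ρ + A / 2`, where `A` is the adjacency
matrix of the path on `n - 1` vertices. If `Ã v = μ v` with `v ≠ 0`, then `B v = μ D⁻¹ v`, so
`v* B v = μ · v* D⁻¹ v` with `v* D⁻¹ v > 0`. The vector `(sin (kπ/n))ₖ` is a positive eigenvector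
of `A` for the eigenvalue `2 cos (π/n)`, so by the Schur test `v* A v ≤ 2 cos (π/n) ‖v‖²` and
`v* B v ≤ (ρ + cos (π/n)) ‖v‖² < 0`. Hence `μ` is a negative real number.
-/

open Real Matrix Finset SimpleGraph
open scoped ComplexOrder

theorem two_mul_le_div_mul_sq_add_div_mul_sq {s t : ℝ} (hs : 0 < s) (ht : 0 < t) (x y : ℝ) :
    2 * (x * y) ≤ t / s * x ^ 2 + s / t * y ^ 2 := by
  rw [div_mul_eq_mul_div, div_mul_eq_mul_div, div_add_div _ _ hs.ne' ht.ne',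
    le_div_iff₀ (by positivity)]
  nlinarith [sq_nonneg (t * x - s * y), mul_pos hs ht]

namespace Matrix

variable {ι : Type*} [Fintype ι]

-- Schur test: AM-GM with the weights `s j / s i` turns the row sums into `(A *ᵥ s) i ≤ r * s i`.
theorem dotProduct_mulVec_le_of_mulVec_le {A : Matrix ι ι ℝ} (hA : A.IsSymm)
    (hA₀ : ∀ i j, 0 ≤ A i j) {s : ι → ℝ} (hs : ∀ i, 0 < s i) {r : ℝ} (hAs : A *ᵥ s ≤ r • s)
    (x : ι → ℝ) : x ⬝ᵥ A *ᵥ x ≤ r * (x ⬝ᵥ x) := by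
  have hterm : ∀ i j, 2 * (x i * (A i j * x j)) ≤
      A i j * s j / s i * x i ^ 2 + A j i * s i / s j * x j ^ 2 := by
    intro i j
    rw [hA.apply i j]
    linear_combination mul_le_mul_of_nonneg_left
      (two_mul_le_div_mul_sq_add_div_mul_sq (hs i) (hs j) (x i) (x j)) (hA₀ i j)
  have hhalf : ∑ i, ∑ j, A i j * s j / s i * x i ^ 2 ≤ r * (x ⬝ᵥ x) := by
    calc ∑ i, ∑ j, A i j * s j / s i * x i ^ 2 = ∑ i, (A *ᵥ s) i * (x i ^ 2 / s i) := by
          refine sum_congr rfl fun i _ => ?_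
          rw [mulVec, dotProduct, sum_mul]
          exact sum_congr rfl fun j _ => by ring
      _ ≤ ∑ i, r * s i * (x i ^ 2 / s i) := by
          gcongr with i
          · exact div_nonneg (sq_nonneg _) (hs i).le
          · exact hAs i
      _ = r * (x ⬝ᵥ x) := by
          rw [dotProduct, mul_sum]
          exact sum_congr rfl fun i _ => by field_simp [(hs i).ne']
  have hquad : 2 * (x ⬝ᵥ A *ᵥ x) = ∑ i, ∑ j, 2 * (x i * (A i j * x j)) := by
    simp only [dotProduct, mulVec, mul_sum]
  have hsum := sum_le_sum fun i (_ : i ∈ univ) => sum_le_sum fun j (_ : j ∈ univ) => hterm i j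
  simp only [sum_add_distrib] at hsum
  rw [sum_comm (f := fun i j => A j i * s i / s j * x j ^ 2)] at hsum
  linarith

end Matrix

theorem Fin.sum_ite_val_eq {M : Type*} [AddCommMonoid M] (m a : ℕ) (f : ℕ → M) :
    ∑ j : Fin m, (if j.val = a then f j else 0) = if a < m then f a else 0 := by
  rw [Fin.sum_univ_eq_sum_range (fun k => if k = a then f k else 0), sum_ite_eq']
  simp only [mem_range]

instance SimpleGraph.decidableRelPathGraphAdj (m : ℕ) : DecidableRel (pathGraph m).Adj :=
  fun _ _ => decidable_of_iff' _ pathGraph_adj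

theorem SimpleGraph.pathGraph_adjMatrix_mulVec_sin (m : ℕ) :
    (pathGraph m).adjMatrix ℝ *ᵥ (fun i : Fin m => sin ((i + 1 : ℕ) * (π / (m + 1)))) =
      (2 * cos (π / (m + 1))) • fun i : Fin m => sin ((i + 1 : ℕ) * (π / (m + 1))) := by
  set θ := π / (m + 1)
  -- `sin` vanishes at `0` and at `(m + 1) θ`, so the two boundary rows need no special care.
  have hsin_end : sin ((m + 1 : ℕ) * θ) = 0 := by
    rw [show ((m + 1 : ℕ) : ℝ) * θ = π by simp [θ]; field_simp]
    exact sin_pi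
  ext ⟨i, hi⟩
  have hsplit : ∀ j : Fin m, ((pathGraph m).adjMatrix ℝ ⟨i, hi⟩ j) * sin ((j + 1 : ℕ) * θ) =
      (if j.val = i + 1 then sin ((j + 1 : ℕ) * θ) else 0) +
        (if j.val + 1 = i then sin ((j + 1 : ℕ) * θ) else 0) := by
    intro j
    simp only [adjMatrix_apply, pathGraph_adj]
    split_ifs <;> first | omega | ring
  have hright : ∑ j : Fin m, (if j.val = i + 1 then sin ((j + 1 : ℕ) * θ) else 0) =
      sin ((i + 2 : ℕ) * θ) := by
    rw [Fin.sum_ite_val_eq m (i + 1) fun k => sin ((k + 1 : ℕ) * θ)]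
    split_ifs with h
    · rfl
    · rw [show i + 2 = m + 1 by omega, hsin_end]
  have hleft : ∑ j : Fin m, (if j.val + 1 = i then sin ((j + 1 : ℕ) * θ) else 0) =
      sin (i * θ) := by
    rcases i with _ | i
    · simp
    · simp only [Nat.add_right_cancel_iff]
      rw [Fin.sum_ite_val_eq m i fun k => sin ((k + 1 : ℕ) * θ), if_pos (by omega)]
  simp only [mulVec, dotProduct, hsplit, sum_add_distrib, hright, hleft, Pi.smul_apply,
    smul_eq_mul]
  rw [mul_right_comm, two_mul_sin_mul_cos]
  push_cast
  ring_nf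

theorem SimpleGraph.pathGraph_adjMatrix_dotProduct_mulVec_le (m : ℕ) (x : Fin m → ℝ) :
    x ⬝ᵥ (pathGraph m).adjMatrix ℝ *ᵥ x ≤ 2 * cos (π / (m + 1)) * (x ⬝ᵥ x) := by
  refine dotProduct_mulVec_le_of_mulVec_le (isSymm_adjMatrix _)
    (fun i j => by rw [adjMatrix_apply]; split_ifs <;> norm_num)
    (fun i => sin_pos_of_pos_of_lt_pi (by positivity) ?_)
    (pathGraph_adjMatrix_mulVec_sin m).le x
  have hi : ((i + 1 : ℕ) : ℝ) < m + 1 := by exact_mod_cast Nat.succ_lt_succ i.isLt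
  calc ((i + 1 : ℕ) : ℝ) * (π / (m + 1)) < (m + 1) * (π / (m + 1)) := by gcongr
    _ = π := by field_simp

namespace Matrix

def tridiagToeplitz (m : ℕ) (a b : ℝ) : Matrix (Fin m) (Fin m) ℝ :=
  a • 1 + b • (pathGraph m).adjMatrix ℝ

theorem tridiagToeplitz_apply (m : ℕ) (a b : ℝ) (i j : Fin m) :
    tridiagToeplitz m a b i j =
      if i = j then a else if i.1 + 1 = j.1 ∨ j.1 + 1 = i.1 then b else 0 := by
  simp only [tridiagToeplitz, add_apply, smul_apply, one_apply, adjMatrix_apply, pathGraph_adj,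
    smul_eq_mul]
  split_ifs <;> first | omega | simp_all

theorem posDef_neg_tridiagToeplitz {m : ℕ} {a b : ℝ} (hb : 0 ≤ b)
    (hab : a + 2 * b * cos (π / (m + 1)) < 0) : (-tridiagToeplitz m a b).PosDef := by
  refine .of_dotProduct_mulVec_pos (isHermitian_iff_isSymm.mpr ?_) fun x hx => ?_
  · exact ((isSymm_one.smul a).add ((isSymm_adjMatrix _).smul b)).neg
  have hxx : 0 < x ⬝ᵥ x := by simpa using dotProduct_star_self_pos_iff.mpr hx
  have hA := mul_le_mul_of_nonneg_left (pathGraph_adjMatrix_dotProduct_mulVec_le m x) hb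
  simp only [tridiagToeplitz, star_trivial, neg_mulVec, add_mulVec, smul_mulVec, one_mulVec,
    dotProduct_neg, dotProduct_add, dotProduct_smul, smul_eq_mul]
  nlinarith

end Matrix

theorem Matrix.PosDef.map_ofReal {n : Type*} [Fintype n] {M : Matrix n n ℝ} (hM : M.PosDef) :
    (M.map ((↑) : ℝ → ℂ)).PosDef := by
  refine .of_dotProduct_mulVec_pos (hM.isHermitian.map _ fun x => (Complex.conj_ofReal x).symm)
    fun v hv => ?_
  set x : n → ℝ := fun i => (v i).re
  set y : n → ℝ := fun i => (v i).im
  have hsymm : x ⬝ᵥ M *ᵥ y = y ⬝ᵥ M *ᵥ x := by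
    rw [dotProduct_mulVec, ← mulVec_transpose, dotProduct_comm,
      (isHermitian_iff_isSymm.mp hM.isHermitian).eq]
  have hform : star v ⬝ᵥ M.map (↑) *ᵥ v = ((x ⬝ᵥ M *ᵥ x + y ⬝ᵥ M *ᵥ y : ℝ) : ℂ) := by
    apply Complex.ext
    · simp [x, y, dotProduct, mulVec, Complex.re_sum, mul_sum, sum_add_distrib]
    · simp [x, y, dotProduct, mulVec, Complex.im_sum, mul_sum, sum_add_distrib] at hsymm ⊢
      linarith
  have hxy : x ≠ 0 ∨ y ≠ 0 := by
    by_contra! h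
    exact hv (funext fun i => Complex.ext (congrFun h.1 i) (congrFun h.2 i))
  rw [hform, Complex.zero_lt_real]
  have hx := hM.posSemidef.dotProduct_mulVec_nonneg x
  have hy := hM.posSemidef.dotProduct_mulVec_nonneg y
  simp only [star_trivial] at hx hy
  rcases hxy with h | h
  · exact add_pos_of_pos_of_nonneg (by simpa using hM.dotProduct_mulVec_pos h) hy
  · exact add_pos_of_nonneg_of_pos hx (by simpa using hM.dotProduct_mulVec_pos h)

theorem Matrix.eigenvalue_neg_of_diagonal_mul_of_posDef_neg {m 𝕜 : Type*} [Fintype m]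
    [DecidableEq m] [RCLike 𝕜] {d : m → ℝ} (hd : ∀ i, 0 < d i) {H : Matrix m m 𝕜}
    (hH : (-H).PosDef) {μ : 𝕜} {v : m → 𝕜} (hv : v ≠ 0)
    (h : (diagonal (fun i => (d i : 𝕜)) * H) *ᵥ v = μ • v) : μ < 0 := by
  have hHv : H *ᵥ v = μ • (diagonal (fun i => ((d i)⁻¹ : 𝕜)) *ᵥ v) := by
    ext i
    have hi := congrFun h i
    have hdi : (d i : 𝕜) ≠ 0 := RCLike.ofReal_ne_zero.mpr (hd i).ne'
    simp only [← mulVec_mulVec, mulVec_diagonal, Pi.smul_apply, smul_eq_mul] at hi ⊢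
    field_simp
    linear_combination hi
  have hq : star v ⬝ᵥ H *ᵥ v < 0 := by
    simpa [neg_mulVec] using hH.dotProduct_mulVec_pos hv
  have hp : 0 < star v ⬝ᵥ diagonal (fun i => ((d i)⁻¹ : 𝕜)) *ᵥ v :=
    (posDef_diagonal_iff.mpr fun i => by simpa using hd i).dotProduct_mulVec_pos hv
  rw [hHv, dotProduct_smul, smul_eq_mul] at hq
  have := mul_neg_of_neg_of_pos hq (inv_pos.mpr hp)
  rwa [mul_assoc, mul_inv_cancel₀ hp.ne', mul_one] at this

theorem DB_eigenvalues_real_negative_general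
    (n : ℕ) (hn : 2 ≤ n) (ρ : ℝ)
    (hcrit : ρ + Real.cos (π / n) < 0)
    (D B : Matrix (Fin (n - 1)) (Fin (n - 1)) ℝ)
    (hD : ∀ i j : Fin (n - 1),
      D i j = if i = j then ((i.1 + 1 : ℝ) * (n - (i.1 + 1))) else 0)
    (hB : ∀ i j : Fin (n - 1),
      B i j = if i = j then ρ
        else if i.1 + 1 = j.1 ∨ j.1 + 1 = i.1 then (1 : ℝ) / 2 else 0) :
    ∀ μ : ℂ, ∀ v : Fin (n - 1) → ℂ, v ≠ 0 →
      ((D * B).map (Complex.ofReal)).mulVec v = μ • v →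
      μ.im = 0 ∧ μ.re < 0 := by
  intro μ v hv hμ
  set d : Fin (n - 1) → ℝ := fun i => (i.1 + 1 : ℝ) * (n - (i.1 + 1))
  have hd : ∀ i, 0 < d i := fun i => by
    have : (i.1 + 1 : ℝ) < n := by exact_mod_cast (by omega : i.1 + 1 < n)
    exact mul_pos (by positivity) (by linarith)
  have hD_eq : D = diagonal d := by
    ext i j
    rw [hD, diagonal_apply]
  have hB_eq : B = tridiagToeplitz (n - 1) ρ (1 / 2) := by
    ext i j
    rw [hB, tridiagToeplitz_apply]
  have hBneg : (-B.map ((↑) : ℝ → ℂ)).PosDef := by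
    rw [← Matrix.map_neg _ Complex.ofReal_neg, hB_eq]
    refine (posDef_neg_tridiagToeplitz (by norm_num) ?_).map_ofReal
    rw [Nat.cast_sub (by omega), Nat.cast_one, sub_add_cancel]
    linarith
  have hmap : (D * B).map ((↑) : ℝ → ℂ) = diagonal (fun i => (d i : ℂ)) * B.map (↑) := by
    rw [hD_eq, ← diagonal_map Complex.ofReal_zero]
    exact Matrix.map_mul (f := Complex.ofRealHom)
  rw [hmap] at hμ
  exact (Complex.lt_def.mp (eigenvalue_neg_of_diagonal_mul_of_posDef_neg hd hBneg hv hμ)).symm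

/-- If `ρ + cos (π/n) < 0`, then the matrix `Ã = D * B`, where `D` is the diagonal matrix
with entries `k (n - k)` for `k = 1,…,n-1` and `B` is the tridiagonal Toeplitz matrix with
diagonal `ρ` and off-diagonals `1/2`, has all eigenvalues real and strictly negative. -/
theorem DB_eigenvalues_real_negative
    (n : ℕ) (hn : 2 ≤ n) (ρ : ℝ) (hρ₁ : -1 ≤ ρ) (hρ₂ : ρ ≤ 0)
    (hcrit : ρ + Real.cos (π / n) < 0)
    (D B : Matrix (Fin (n - 1)) (Fin (n - 1)) ℝ)
    (hD : ∀ i j : Fin (n - 1),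
      D i j = if i = j then ((i.1 + 1 : ℝ) * (n - (i.1 + 1))) else 0)
    (hB : ∀ i j : Fin (n - 1),
      B i j = if i = j then ρ
        else if i.1 + 1 = j.1 ∨ j.1 + 1 = i.1 then (1 : ℝ) / 2 else 0) :
    ∀ μ : ℂ, ∀ v : Fin (n - 1) → ℂ, v ≠ 0 →
      ((D * B).map (Complex.ofReal)).mulVec v = μ • v →
      μ.im = 0 ∧ μ.re < 0 :=
  DB_eigenvalues_real_negative_general n hn ρ hcrit D B hD hB
end

section
/- Let A be a real n×n matrix of the form A = D + B, where D is diagonal and B has nonnegative entries, and suppose V is a vector with nonnegative entries satisfying A V = 0. Then for any vector W with 0 ≤ W ≤ V coordinatewise and any coordinate m with W(m) = V(m), one has (A W)(m) ≤ 0. Consequently, any solution K_t of dK_t/dt = A K_t with 0 ≤ K_0 ≤ V coordinatewise satisfies K_t ≤ V coordinatewise for all t ≥ 0. -/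
/-!
Since `A` is Metzler (nonnegative off the diagonal), `A + c • 1` is entrywise nonnegative for
`c` large, hence so is `exp (t • (A + c • 1)) = exp (t * c) • exp (t • A)` for `t ≥ 0`. Thus
`exp (t • A)` is monotone on vectors, and it fixes the null vector `V`, so `K₀ ≤ V` gives
`exp (t • A) *ᵥ K₀ ≤ exp (t • A) *ᵥ V = V`.
-/

open Matrix NormedSpace

namespace Matrix

variable {ι R : Type*} [Fintype ι]

def IsMetzler [Zero R] [LE R] (A : Matrix ι ι R) : Prop :=
  ∀ i j, i ≠ j → 0 ≤ A i j

omit [Fintype ι] in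
theorem IsDiag.isMetzler_add [AddZeroClass R] [LE R] {D B : Matrix ι ι R} (hD : D.IsDiag)
    (hB : ∀ i j, 0 ≤ B i j) : (D + B).IsMetzler := fun i j hij => by
  simpa [hD hij] using hB i j

section OrderedSemiring

variable [Semiring R] [PartialOrder R] [IsOrderedRing R]

theorem IsMetzler.mulVec_apply_le {A : Matrix ι ι R} (hA : A.IsMetzler) {W V : ι → R}
    (hWV : W ≤ V) {m : ι} (hm : W m = V m) : (A *ᵥ W) m ≤ (A *ᵥ V) m := by
  refine Finset.sum_le_sum fun j _ => ?_
  rcases eq_or_ne m j with rfl | hmj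
  · rw [hm]
  · exact mul_le_mul_of_nonneg_left (hWV j) (hA m j hmj)

theorem mulVec_mono_of_nonneg {M : Matrix ι ι R} (hM : ∀ i j, 0 ≤ M i j) {W V : ι → R}
    (hWV : W ≤ V) : M *ᵥ W ≤ M *ᵥ V := fun i =>
  Finset.sum_le_sum fun j _ => mul_le_mul_of_nonneg_left (hWV j) (hM i j)

end OrderedSemiring

variable [DecidableEq ι]

theorem exp_series_hasSum_exp' (A : Matrix ι ι ℝ) : HasSum (fun n : ℕ => (n.factorial⁻¹ : ℝ) • A ^ n) (exp A) := by
  open scoped Norms.Operator in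
  exact NormedSpace.exp_series_hasSum_exp' A

theorem exp_apply_nonneg {M : Matrix ι ι ℝ} (hM : ∀ i j, 0 ≤ M i j) (i j : ι) :
    0 ≤ exp M i j :=
  (Pi.hasSum.mp (Pi.hasSum.mp (exp_series_hasSum_exp' M) i) j).nonneg fun n =>
    mul_nonneg (by positivity) (pow_apply_nonneg hM n i j)

theorem exp_mulVec_eq_self_of_mulVec_eq_zero {A : Matrix ι ι ℝ} {V : ι → ℝ}
    (hAV : A *ᵥ V = 0) : exp A *ᵥ V = V := by
  have hsum : HasSum (fun n : ℕ => ((n.factorial⁻¹ : ℝ) • A ^ n) *ᵥ V) (exp A *ᵥ V) :=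
    (exp_series_hasSum_exp' A).map (mulVec.addMonoidHomLeft V)
      (continuous_id.matrix_mulVec continuous_const)
  have hterm : ∀ n : ℕ, ((n.factorial⁻¹ : ℝ) • A ^ n) *ᵥ V = if n = 0 then V else 0 := by
    rintro (_ | n)
    · simp
    · rw [smul_mulVec, pow_succ, ← mulVec_mulVec, hAV]
      simp
  simp only [hterm] at hsum
  exact hsum.unique (hasSum_ite_eq 0 V)

theorem exp_smul_one_add (c : ℝ) (A : Matrix ι ι ℝ) :
    exp (c • 1 + A) = Real.exp c • exp A := by
  rw [exp_add_of_commute _ _ ((Commute.one_left A).smul_left c), smul_one_eq_diagonal,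
    exp_diagonal, Pi.exp_def, ← Real.exp_eq_exp_ℝ, ← smul_one_eq_diagonal, smul_one_mul]

theorem IsMetzler.exists_smul_one_add_nonneg {A : Matrix ι ι ℝ} (hA : A.IsMetzler) :
    ∃ c : ℝ, ∀ i j, 0 ≤ (c • 1 + A) i j := by
  obtain ⟨c, hc⟩ := (Set.finite_range fun i => -A i i).bddAbove
  refine ⟨c, fun i j => ?_⟩
  rcases eq_or_ne i j with rfl | hij
  · simpa [neg_le_iff_add_nonneg] using hc ⟨i, rfl⟩
  · simpa [one_apply_ne hij] using hA i j hij

theorem IsMetzler.exp_smul_mulVec_le {A : Matrix ι ι ℝ} (hA : A.IsMetzler) {V K : ι → ℝ}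
    (hAV : A *ᵥ V = 0) (hKV : K ≤ V) {t : ℝ} (ht : 0 ≤ t) : exp (t • A) *ᵥ K ≤ V := by
  obtain ⟨c, hc⟩ := hA.exists_smul_one_add_nonneg
  set M := t • (c • 1 + A) with hMdef
  have hshift : exp (t • A) = Real.exp (-(t * c)) • exp M := by
    rw [hMdef, smul_add, smul_smul, ← exp_smul_one_add, ← add_assoc, ← add_smul, neg_add_cancel,
      zero_smul, zero_add]
  have hM : ∀ i j, 0 ≤ M i j := fun i j => mul_nonneg ht (hc i j)
  calc exp (t • A) *ᵥ K
      = Real.exp (-(t * c)) • (exp M *ᵥ K) := by rw [hshift, smul_mulVec]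
    _ ≤ Real.exp (-(t * c)) • (exp M *ᵥ V) :=
        smul_le_smul_of_nonneg_left (mulVec_mono_of_nonneg (exp_apply_nonneg hM) hKV)
          (Real.exp_pos _).le
    _ = exp (t • A) *ᵥ V := by rw [hshift, smul_mulVec]
    _ = V := exp_mulVec_eq_self_of_mulVec_eq_zero (by rw [smul_mulVec, hAV, smul_zero])

end Matrix

theorem domination_by_null_vector_general
    {ι : Type*} [Fintype ι] [DecidableEq ι]
    (A D B : Matrix ι ι ℝ) (hA : A = D + B)
    (hDdiag : ∀ i j : ι, i ≠ j → D i j = 0)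
    (hBnonneg : ∀ i j : ι, 0 ≤ B i j)
    (V : ι → ℝ) (hAV : A.mulVec V = 0) :
    (∀ W : ι → ℝ, (∀ i, 0 ≤ W i) → (∀ i, W i ≤ V i) →
      ∀ m : ι, W m = V m → A.mulVec W m ≤ 0)
    ∧ (∀ K₀ : ι → ℝ, (∀ i, 0 ≤ K₀ i) → (∀ i, K₀ i ≤ V i) →
        ∀ t : ℝ, 0 ≤ t → ∀ m : ι, (NormedSpace.exp (t • A)).mulVec K₀ m ≤ V m) := by
  have hMetzler : A.IsMetzler := hA ▸ IsDiag.isMetzler_add hDdiag hBnonneg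
  refine ⟨fun W _ hWV m hm => ?_, fun K₀ _ hKV t ht => hMetzler.exp_smul_mulVec_le hAV hKV ht⟩
  simpa [hAV] using hMetzler.mulVec_apply_le hWV hm

/-- Let `A = D + B` with `D` diagonal and `B` entrywise nonnegative, and let `V ≥ 0`
satisfy `A V = 0`. Then for any `0 ≤ W ≤ V` coordinatewise with `W m = V m`, one has
`(A W) m ≤ 0`; consequently, any solution `K t = exp(tA) K₀` of `dK/dt = A K` with
`0 ≤ K₀ ≤ V` satisfies `K t ≤ V` coordinatewise for all `t ≥ 0`. -/
theorem domination_by_null_vector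
    {ι : Type*} [Fintype ι] [DecidableEq ι]
    (A D B : Matrix ι ι ℝ) (hA : A = D + B)
    (hDdiag : ∀ i j : ι, i ≠ j → D i j = 0)
    (hBnonneg : ∀ i j : ι, 0 ≤ B i j)
    (V : ι → ℝ) (hVnonneg : ∀ i, 0 ≤ V i) (hAV : A.mulVec V = 0) :
    (∀ W : ι → ℝ, (∀ i, 0 ≤ W i) → (∀ i, W i ≤ V i) →
      ∀ m : ι, W m = V m → A.mulVec W m ≤ 0)
    ∧ (∀ K₀ : ι → ℝ, (∀ i, 0 ≤ K₀ i) → (∀ i, K₀ i ≤ V i) →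
        ∀ t : ℝ, 0 ≤ t → ∀ m : ι, (NormedSpace.exp (t • A)).mulVec K₀ m ≤ V m) :=
  domination_by_null_vector_general A D B hA hDdiag hBnonneg V hAV
end

section
/- Let (u¹, u²) ∈ 𝒰 (absolutely continuous, mutually singular, with u¹+u² equivalent to Lebesgue measure). If a, b ∈ I(u) with a < b and I(u) ∩ (a,b) = ∅, then there exists i ∈ {1,2} with (a,b) ⊆ supp(u^i) \ supp(u^{3-i}). -/
/-!
The supports of `u₁` and `u₂` are closed, and since `u₁ + u₂` charges every ball they cover `ℝ`.
If no interface point lies in `(a, b)`, these two closed sets split the interval into disjoint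
relatively closed pieces, so by connectedness one of them misses it entirely.
-/

open MeasureTheory

/-- The measure-theoretic support of a measure on `ℝ`. -/
def msupp (u : Measure ℝ) : Set ℝ := {x : ℝ | ∀ ε > 0, 0 < u (Metric.ball x ε)}

theorem msupp_eq_support (u : Measure ℝ) : msupp u = u.support := by
  ext x
  exact (Metric.nhds_basis_ball.mem_measureSupport).symm

theorem isClosed_msupp (u : Measure ℝ) : IsClosed (msupp u) :=
  msupp_eq_support u ▸ Measure.isClosed_support

theorem msupp_union_eq_univ {u₁ u₂ : Measure ℝ} (h : (volume : Measure ℝ) ≪ u₁ + u₂) :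
    msupp u₁ ∪ msupp u₂ = Set.univ := by
  rw [msupp_eq_support, msupp_eq_support, ← Measure.support_add]
  have hvol : (volume : Measure ℝ).support = Set.univ := Measure.support_eq_univ
  exact Set.eq_univ_of_univ_subset (hvol ▸ h.support_mono)

theorem IsPreconnected.subset_diff_or_subset_diff {X : Type*} [TopologicalSpace X]
    {s A B : Set X} (hs : IsPreconnected s) (hA : IsClosed A) (hB : IsClosed B)
    (hcover : s ⊆ A ∪ B) (hdisj : A ∩ B ∩ s = ∅) :
    s ⊆ A \ B ∨ s ⊆ B \ A := by
  have hnot : ¬ ((s ∩ A).Nonempty ∧ (s ∩ B).Nonempty) := fun ⟨hsA, hsB⟩ ↦ by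
    obtain ⟨x, hxs, hxA, hxB⟩ := isPreconnected_closed_iff.mp hs A B hA hB hcover hsA hsB
    exact hdisj.subset ⟨⟨hxA, hxB⟩, hxs⟩
  rw [not_and_or, Set.not_nonempty_iff_eq_empty, Set.not_nonempty_iff_eq_empty] at hnot
  rcases hnot with hsA | hsB
  · exact Or.inr fun x hx ↦
      ⟨(hcover hx).resolve_left fun hxA ↦ hsA.subset ⟨hx, hxA⟩, fun hxA ↦ hsA.subset ⟨hx, hxA⟩⟩
  · exact Or.inl fun x hx ↦
      ⟨(hcover hx).resolve_right fun hxB ↦ hsB.subset ⟨hx, hxB⟩, fun hxB ↦ hsB.subset ⟨hx, hxB⟩⟩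

theorem no_interface_interval_single_type_general
    (u₁ u₂ : Measure ℝ)
    (hequiv₂ : (volume : Measure ℝ) ≪ u₁ + u₂)
    (a b : ℝ)
    (hno : (msupp u₁ ∩ msupp u₂) ∩ Set.Ioo a b = ∅) :
    Set.Ioo a b ⊆ msupp u₁ \ msupp u₂ ∨ Set.Ioo a b ⊆ msupp u₂ \ msupp u₁ :=
  isPreconnected_Ioo.subset_diff_or_subset_diff (isClosed_msupp u₁) (isClosed_msupp u₂)
    (msupp_union_eq_univ hequiv₂ ▸ Set.subset_univ _) hno

/-- If `a, b` are interface points with `a < b` and there is no interface point strictly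
between them, then `(a,b)` is entirely contained in the support of one type and disjoint
from the support of the other. -/
theorem no_interface_interval_single_type
    (u₁ u₂ : Measure ℝ) [IsLocallyFiniteMeasure u₁] [IsLocallyFiniteMeasure u₂]
    (hac₁ : u₁ ≪ volume) (hac₂ : u₂ ≪ volume)
    (hsing : u₁ ⟂ₘ u₂)
    (hequiv₁ : u₁ + u₂ ≪ volume) (hequiv₂ : (volume : Measure ℝ) ≪ u₁ + u₂)
    (a b : ℝ) (hab : a < b)
    (ha : a ∈ msupp u₁ ∩ msupp u₂) (hb : b ∈ msupp u₁ ∩ msupp u₂)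
    (hno : (msupp u₁ ∩ msupp u₂) ∩ Set.Ioo a b = ∅) :
    Set.Ioo a b ⊆ msupp u₁ \ msupp u₂ ∨ Set.Ioo a b ⊆ msupp u₂ \ msupp u₁ :=
  no_interface_interval_single_type_general u₁ u₂ hequiv₂ a b hno
end

section
/- Let u¹, u² be mutually singular absolutely continuous nonnegative measures on ℝ with u¹ + u² equal to Lebesgue measure, and let x ∈ supp(u¹) ∩ supp(u²). Then in any open neighborhood O of x there exists a nondegenerate interval A ⊆ O with u¹(A) = u²(A) = |A|/2 > 0. -/
open MeasureTheory

/-!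
Mutual singularity and `u¹ + u² = λ` force `u¹ = λ|_S` and `u² = λ|_Sᶜ` for a measurable `S`.
Since `x` lies in both supports, every ball around `x` contains a Lebesgue density point `y` of `S`
and one, `z`, of `Sᶜ`; for a small common radius `r` the interval of length `2r` centred at `y` is
more than half in `S`, the one centred at `z` less than half. The `S`-mass of `[t, t + 2r]` is
continuous in `t`, so the intermediate value theorem yields `t` where it is exactly half.
-/

open Filter Metric Topology Set ENNReal

theorem MeasureTheory.Measure.MutuallySingular.exists_eq_restrict_of_add_eq {α : Type*}
    [MeasurableSpace α] {μ ν ρ : Measure α} (h : μ ⟂ₘ ν) (hρ : μ + ν = ρ) :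
    ∃ s, MeasurableSet s ∧ μ = ρ.restrict s ∧ ν = ρ.restrict sᶜ := by
  refine ⟨h.nullSetᶜ, h.measurableSet_nullSet.compl, ?_, ?_⟩
  · rw [← hρ, Measure.restrict_add, h.restrict_compl_nullSet, add_zero]
    exact (Measure.restrict_eq_self_of_ae_mem (compl_mem_ae_iff.mpr h.measure_nullSet)).symm
  · rw [← hρ, Measure.restrict_add, compl_compl, h.restrict_nullSet, zero_add]
    exact (Measure.restrict_eq_self_of_ae_mem (mem_ae_iff.mpr h.measure_compl_nullSet)).symm

theorem Besicovitch.exists_mem_tendsto_measure_inter_div {β : Type*} [MetricSpace β]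
    [MeasurableSpace β] [BorelSpace β] [SecondCountableTopology β] [HasBesicovitchCovering β]
    (μ : Measure β) [IsLocallyFiniteMeasure μ] {s U : Set β} (h : 0 < μ (U ∩ s)) :
    ∃ y ∈ U, Tendsto (fun r => μ (s ∩ closedBall y r) / μ (closedBall y r)) (𝓝[>] 0) (𝓝 1) := by
  by_contra! hU
  have hnull : μ.restrict s U = 0 :=
    measure_mono_null hU (ae_iff.mp (Besicovitch.ae_tendsto_measure_inter_div μ s))
  exact h.ne' (le_zero_iff.mp (hnull ▸ Measure.le_restrict_apply s U))

theorem eventually_half_measure_closedBall_lt {β : Type*} [MetricSpace β] [ProperSpace β]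
    [MeasurableSpace β] {μ : Measure β} [IsFiniteMeasureOnCompacts μ] [μ.IsOpenPosMeasure]
    {s : Set β} {y : β}
    (h : Tendsto (fun r => μ (s ∩ closedBall y r) / μ (closedBall y r)) (𝓝[>] 0) (𝓝 1)) :
    ∀ᶠ r in 𝓝[>] 0, μ (closedBall y r) / 2 < μ (closedBall y r ∩ s) := by
  filter_upwards [h.eventually (eventually_gt_nhds ENNReal.one_half_lt_one), self_mem_nhdsWithin]
    with r hr (hr0 : 0 < r)
  rw [ENNReal.lt_div_iff_mul_lt (Or.inl (measure_closedBall_pos μ y hr0).ne')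
    (Or.inl measure_closedBall_lt_top.ne), mul_comm, ← div_eq_mul_inv] at hr
  rwa [inter_comm]

theorem measure_inter_compl_eq_half {α : Type*} [MeasurableSpace α] {μ : Measure α}
    {s t : Set α} (hs : MeasurableSet s) (ht : μ t ≠ ∞) (h : μ (t ∩ s) = μ t / 2) :
    μ (t ∩ sᶜ) = μ t / 2 := by
  have hsplit := measure_inter_add_sdiff (μ := μ) t hs
  rw [h, sdiff_eq] at hsplit
  nth_rewrite 2 [← ENNReal.add_halves (μ t)] at hsplit
  exact (ENNReal.add_right_inj (ENNReal.div_ne_top ht two_ne_zero)).mp hsplit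

theorem continuous_volume_Icc_inter (s : Set ℝ) (L : ℝ) :
    Continuous fun t => volume (Icc t (t + L) ∩ s) := by
  refine continuous_of_le_add_edist 2 ofNat_ne_top fun b a => ?_
  have hsub : Icc b (b + L) ∩ s ⊆ (Icc a (a + L) ∩ s) ∪ uIcc a b ∪ uIcc (a + L) (b + L) := by
    rintro u ⟨⟨hbu, hub⟩, hu⟩
    by_cases hau : a ≤ u
    · by_cases hua : u ≤ a + L
      · exact Or.inl (Or.inl ⟨⟨hau, hua⟩, hu⟩)
      · exact Or.inr (Icc_subset_uIcc ⟨(not_le.mp hua).le, hub⟩)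
    · exact Or.inl (Or.inr (Icc_subset_uIcc' ⟨hbu, (not_le.mp hau).le⟩))
  calc volume (Icc b (b + L) ∩ s)
      ≤ volume (Icc a (a + L) ∩ s) + volume (uIcc a b) + volume (uIcc (a + L) (b + L)) :=
        (measure_mono hsub).trans <|
          (measure_union_le _ _).trans (by gcongr; exact measure_union_le _ _)
    _ = volume (Icc a (a + L) ∩ s) + 2 * edist b a := by
        rw [Real.volume_interval, Real.volume_interval, add_sub_add_right_eq_sub, edist_dist,
          Real.dist_eq, add_assoc, two_mul]

theorem exists_volume_Icc_inter_eq_half {s : Set ℝ} (hs : MeasurableSet s) {a b L : ℝ}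
    (ha : volume (Icc a (a + L)) / 2 < volume (Icc a (a + L) ∩ s))
    (hb : volume (Icc b (b + L)) / 2 < volume (Icc b (b + L) ∩ sᶜ)) :
    ∃ t ∈ uIcc a b, volume (Icc t (t + L) ∩ s) = volume (Icc t (t + L)) / 2 := by
  have hvol : ∀ t, volume (Icc t (t + L)) = ENNReal.ofReal L := fun t => by
    rw [Real.volume_Icc, add_sub_cancel_left]
  simp only [hvol] at ha hb ⊢
  have hb' : volume (Icc b (b + L) ∩ s) < ENNReal.ofReal L / 2 := by
    by_contra! hle
    have hsplit := measure_inter_add_sdiff (μ := volume) (Icc b (b + L)) hs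
    rw [hvol] at hsplit
    have := ENNReal.add_lt_add_of_le_of_lt (ENNReal.div_ne_top ofReal_ne_top two_ne_zero) hle hb
    rw [ENNReal.add_halves, ← sdiff_eq, hsplit] at this
    exact lt_irrefl _ this
  exact intermediate_value_uIcc (continuous_volume_Icc_inter s L).continuousOn
    (mem_uIcc.mpr (Or.inr ⟨hb'.le, ha.le⟩))

theorem balanced_interval_exists_general
    (u₁ u₂ : Measure ℝ)
    (hsing : u₁ ⟂ₘ u₂)
    (hsum : u₁ + u₂ = volume)
    (x : ℝ) (hx : x ∈ msupp u₁ ∩ msupp u₂)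
    (O : Set ℝ) (hO : IsOpen O) (hxO : x ∈ O) :
    ∃ a b : ℝ, a < b ∧ Set.Icc a b ⊆ O ∧
      u₁ (Set.Icc a b) = volume (Set.Icc a b) / 2 ∧
      u₂ (Set.Icc a b) = volume (Set.Icc a b) / 2 ∧
      0 < u₁ (Set.Icc a b) := by
  obtain ⟨S, hS, rfl, rfl⟩ := hsing.exists_eq_restrict_of_add_eq hsum
  obtain ⟨ε, hε, hεO⟩ := Metric.isOpen_iff.mp hO x hxO
  have hδ : 0 < ε / 2 := half_pos hε
  have hpos (T : Set ℝ) (hT : x ∈ msupp (volume.restrict T)) : 0 < volume (ball x (ε / 2) ∩ T) :=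
    (hT _ hδ).trans_eq (Measure.restrict_apply measurableSet_ball)
  obtain ⟨y, hy, hyS⟩ := Besicovitch.exists_mem_tendsto_measure_inter_div volume (hpos S hx.1)
  obtain ⟨z, hz, hzS⟩ := Besicovitch.exists_mem_tendsto_measure_inter_div volume (hpos Sᶜ hx.2)
  obtain ⟨r, hyr, hzr, hr, hrε⟩ := ((eventually_half_measure_closedBall_lt hyS).and
    ((eventually_half_measure_closedBall_lt hzS).and (Ioo_mem_nhdsGT hδ))).exists
  have hI : ∀ w, closedBall w r = Icc (w - r) (w - r + 2 * r) := fun w => by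
    rw [Real.closedBall_eq_Icc]; ring_nf
  rw [hI] at hyr hzr
  obtain ⟨t, ht, hhalf⟩ := exists_volume_Icc_inter_eq_half hS hyr hzr
  refine ⟨t, t + 2 * r, by linarith, ?_, ?_, ?_, ?_⟩
  · intro u hu
    rw [mem_ball, Real.dist_eq, abs_lt] at hy hz
    apply hεO
    rw [mem_ball, Real.dist_eq, abs_lt]
    rcases mem_uIcc.mp ht with ht | ht <;> constructor <;>
      linarith [hu.1, hu.2, ht.1, ht.2, hy.1, hy.2, hz.1, hz.2]
  · rwa [Measure.restrict_apply measurableSet_Icc]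
  · rw [Measure.restrict_apply measurableSet_Icc]
    exact measure_inter_compl_eq_half hS measure_Icc_lt_top.ne hhalf
  · rw [Measure.restrict_apply measurableSet_Icc, hhalf, Real.volume_Icc]
    exact ENNReal.half_pos (ENNReal.ofReal_pos.mpr (by linarith)).ne'

/-- If `u¹, u²` are mutually singular absolutely continuous measures with
`u¹ + u² = Lebesgue` and `x` is an interface point, then every open neighborhood of `x`
contains a nondegenerate interval `A` with `u¹ A = u² A = |A| / 2 > 0`. -/
theorem balanced_interval_exists
    (u₁ u₂ : Measure ℝ)
    (hac₁ : u₁ ≪ volume) (hac₂ : u₂ ≪ volume)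
    (hsing : u₁ ⟂ₘ u₂)
    (hsum : u₁ + u₂ = volume)
    (x : ℝ) (hx : x ∈ msupp u₁ ∩ msupp u₂)
    (O : Set ℝ) (hO : IsOpen O) (hxO : x ∈ O) :
    ∃ a b : ℝ, a < b ∧ Set.Icc a b ⊆ O ∧
      u₁ (Set.Icc a b) = volume (Set.Icc a b) / 2 ∧
      u₂ (Set.Icc a b) = volume (Set.Icc a b) / 2 ∧
      0 < u₁ (Set.Icc a b) :=
  balanced_interval_exists_general u₁ u₂ hsing hsum x hx O hO hxO
end

section
/- Let u¹, u² be mutually singular absolutely continuous nonnegative measures on ℝ with u¹ + u² equal to Lebesgue measure, and let A = (a,b) be an interval with u¹(A) = u²(A) = |A|/2 > 0. Then there exists a subinterval A' ⊆ A with |A'| = |A|/2 and u¹(A') = u²(A') = |A'|/2. -/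
/-!
Since `u₁ ≤ u₁ + u₂ = volume`, the distribution function `t ↦ u₁ (a, t]` is 1-Lipschitz, so
the mass `u₁ (x, x + |A|/2)` of a sliding window of half the length of `A` is continuous in `x`.
The windows at `x = a` and `x = (a + b)/2` tile `A` up to a point, so their masses average
`u₁ A / 2 = |A|/4`, and by the intermediate value theorem some window carries exactly this mass;
`u₂` then carries the other half of that window.
-/

open MeasureTheory Set

theorem exists_mem_Icc_eq_average {g : ℝ → ℝ} {p q : ℝ} (hpq : p ≤ q)
    (hg : ContinuousOn g (Icc p q)) : ∃ x ∈ Icc p q, g x = (g p + g q) / 2 := by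
  have hmid : (g p + g q) / 2 ∈ uIcc (g p) (g q) := by
    rcases le_total (g p) (g q) with h | h
    · exact mem_uIcc_of_le (by linarith) (by linarith)
    · exact mem_uIcc_of_ge (by linarith) (by linarith)
  rw [← uIcc_of_le hpq] at hg
  simpa [uIcc_of_le hpq, eq_comm] using intermediate_value_uIcc hg hmid

theorem nullSingletonClass_of_le {α : Type*} [MeasurableSpace α] {μ ν : Measure α}
    [NullSingletonClass ν] (h : μ ≤ ν) : NullSingletonClass μ :=
  ⟨fun x => le_antisymm ((Measure.le_iff'.1 h {x}).trans_eq (measure_singleton x)) bot_le⟩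

theorem measure_eq_half_iff_measureReal {α : Type*} [MeasurableSpace α] {μ ν : Measure α}
    {s : Set α} (hμ : μ s ≠ ⊤) (hν : ν s ≠ ⊤) :
    μ s = ν s / 2 ↔ μ.real s = ν.real s / 2 := by
  rw [measureReal_def, measureReal_def, ← ENNReal.toReal_eq_toReal_iff' hμ
    (ENNReal.div_ne_top hν two_ne_zero), ENNReal.toReal_div, ENNReal.toReal_ofNat]

theorem apply_eq_half_of_add_eq {α : Type*} [MeasurableSpace α] {μ ν ρ : Measure α}
    (hsum : μ + ν = ρ) {s : Set α} (hs : ρ s ≠ ⊤) (hμ : μ s = ρ s / 2) : ν s = ρ s / 2 := by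
  have hadd : ρ s / 2 + ν s = ρ s / 2 + ρ s / 2 := by
    rw [ENNReal.add_halves, ← hμ, ← hsum, Measure.add_apply]
  exact (ENNReal.add_right_inj (ENNReal.div_ne_top hs two_ne_zero)).1 hadd

theorem Ioc_sdiff_Ioc_of_le {α : Type*} [LinearOrder α] {a s t : α} (has : a ≤ s) :
    Ioc a t \ Ioc a s = Ioc s t := by
  ext x
  simp only [mem_sdiff, mem_Ioc, not_and, not_le]
  constructor
  · rintro ⟨⟨hax, hxt⟩, hsx⟩
    exact ⟨hsx hax, hxt⟩
  · rintro ⟨hsx, hxt⟩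
    exact ⟨⟨has.trans_lt hsx, hxt⟩, fun _ => hsx⟩

section DominatedByLebesgue

variable {μ : Measure ℝ}

theorem lipschitzWith_measureReal_Ioc (h : μ ≤ volume) (a : ℝ) :
    LipschitzWith 1 fun t => μ.real (Ioc a t) := by
  have : IsLocallyFiniteMeasure μ := Measure.isLocallyFiniteMeasure_of_le h
  refine LipschitzWith.of_le_add_mul 1 fun t s => ?_
  rcases le_total t s with hts | hst
  · have hmono : μ.real (Ioc a t) ≤ μ.real (Ioc a s) :=
      measureReal_mono (Ioc_subset_Ioc_right hts) measure_Ioc_lt_top.ne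
    have hdist := dist_nonneg (x := t) (y := s)
    simp only [NNReal.coe_one, one_mul]
    linarith
  · have hsub : Ioc a t \ Ioc a s ⊆ Ioc s t := fun x ⟨⟨hax, hxt⟩, hxs⟩ =>
      ⟨not_le.1 fun hxs' => hxs ⟨hax, hxs'⟩, hxt⟩
    calc μ.real (Ioc a t) = μ.real (Ioc a s) + μ.real (Ioc a t \ Ioc a s) := by
          rw [measureReal_sdiff (Ioc_subset_Ioc_right hst) measurableSet_Ioc
            measure_Ioc_lt_top.ne]
          ring
      _ ≤ μ.real (Ioc a s) + volume.real (Ioc s t) := by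
          gcongr
          exact (measureReal_mono hsub measure_Ioc_lt_top.ne).trans
            (ENNReal.toReal_mono measure_Ioc_lt_top.ne (Measure.le_iff'.1 h _))
      _ = μ.real (Ioc a s) + 1 * dist t s := by
          rw [Real.volume_real_Ioc_of_le hst, Real.dist_eq, abs_of_nonneg (by linarith), one_mul]

theorem exists_measureReal_Ioo_eq_half (h : μ ≤ volume) {a b : ℝ} (hab : a ≤ b) :
    ∃ x ∈ Icc a ((a + b) / 2),
      μ.real (Ioo x (x + (b - a) / 2)) = μ.real (Ioo a b) / 2 := by
  have : IsLocallyFiniteMeasure μ := Measure.isLocallyFiniteMeasure_of_le h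
  have : NullSingletonClass μ := nullSingletonClass_of_le h
  set F := fun t => μ.real (Ioc a t)
  set c := (b - a) / 2
  have hc : 0 ≤ c := div_nonneg (sub_nonneg.2 hab) zero_le_two
  have hwindow : ∀ x, a ≤ x → μ.real (Ioo x (x + c)) = F (x + c) - F x := by
    intro x hx
    rw [measureReal_congr Ioo_ae_eq_Ioc, ← Ioc_sdiff_Ioc_of_le hx,
      measureReal_sdiff (Ioc_subset_Ioc_right (by linarith)) measurableSet_Ioc
        measure_Ioc_lt_top.ne]
  have hcont : Continuous fun x => F (x + c) - F x := by
    have hF : Continuous F := (lipschitzWith_measureReal_Ioc h a).continuous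
    fun_prop
  obtain ⟨x, hx, hFx⟩ :=
    exists_mem_Icc_eq_average (p := a) (q := a + c) (by linarith) hcont.continuousOn
  have hac : a + c = (a + b) / 2 := by ring
  have hacc : a + c + c = b := by ring
  refine ⟨x, hac ▸ hx, ?_⟩
  rw [hwindow x hx.1, hFx, hacc, measureReal_congr (Ioo_ae_eq_Ioc (a := a))]
  simp [F]

end DominatedByLebesgue

theorem balanced_subinterval_exists_general
    (u₁ u₂ : Measure ℝ)
    (hsum : u₁ + u₂ = volume)
    (a b : ℝ) (hab : a < b)
    (h₁ : u₁ (Set.Ioo a b) = volume (Set.Ioo a b) / 2) :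
    ∃ a' b' : ℝ, a ≤ a' ∧ a' < b' ∧ b' ≤ b ∧ b' - a' = (b - a) / 2 ∧
      u₁ (Set.Ioo a' b') = volume (Set.Ioo a' b') / 2 ∧
      u₂ (Set.Ioo a' b') = volume (Set.Ioo a' b') / 2 := by
  have hle : u₁ ≤ volume := hsum ▸ Measure.le_add_right le_rfl
  have : IsLocallyFiniteMeasure u₁ := Measure.isLocallyFiniteMeasure_of_le hle
  obtain ⟨x, ⟨hax, hxb⟩, hx⟩ := exists_measureReal_Ioo_eq_half hle hab.le
  rw [measure_eq_half_iff_measureReal measure_Ioo_lt_top.ne measure_Ioo_lt_top.ne,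
    Real.volume_real_Ioo_of_le hab.le] at h₁
  have hwin : u₁ (Ioo x (x + (b - a) / 2)) = volume (Ioo x (x + (b - a) / 2)) / 2 := by
    rw [measure_eq_half_iff_measureReal measure_Ioo_lt_top.ne measure_Ioo_lt_top.ne, hx, h₁,
      Real.volume_real_Ioo_of_le (by linarith)]
    ring
  exact ⟨x, x + (b - a) / 2, hax, by linarith, by linarith, by ring, hwin,
    apply_eq_half_of_add_eq hsum measure_Ioo_lt_top.ne hwin⟩

/-- Halving lemma: if `A = (a,b)` satisfies `u¹ A = u² A = |A|/2 > 0`, then there is a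
subinterval `A' ⊆ A` of half the length with the same balanced property. -/
theorem balanced_subinterval_exists
    (u₁ u₂ : Measure ℝ)
    (hac₁ : u₁ ≪ volume) (hac₂ : u₂ ≪ volume)
    (hsing : u₁ ⟂ₘ u₂)
    (hsum : u₁ + u₂ = volume)
    (a b : ℝ) (hab : a < b)
    (h₁ : u₁ (Set.Ioo a b) = volume (Set.Ioo a b) / 2)
    (h₂ : u₂ (Set.Ioo a b) = volume (Set.Ioo a b) / 2)
    (hpos : 0 < u₁ (Set.Ioo a b)) :
    ∃ a' b' : ℝ, a ≤ a' ∧ a' < b' ∧ b' ≤ b ∧ b' - a' = (b - a) / 2 ∧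
      u₁ (Set.Ioo a' b') = volume (Set.Ioo a' b') / 2 ∧
      u₂ (Set.Ioo a' b') = volume (Set.Ioo a' b') / 2 :=
  balanced_subinterval_exists_general u₁ u₂ hsum a b hab h₁
end

section
/- Let n ≥ 2, ρ ∈ (-1,0) with ρ + cos(π/n) < 0, and λ = arccos(-ρ). Define the vector v on {1,2}^n by v(m) = sin(λ·#₁m)/sin(λn), where #₁m is the number of coordinates of m equal to 1. Then v is in the kernel of the matrix A defined by A(m,m) = (ρ/2)Σ_{i,j} 1_{m_i≠m_j}, A(m,m̂^i) = (1/2)Σ_j 1_{m_i≠m_j}, and A(m,m')=0 otherwise; moreover v((1,…,1)) = 1 and v((2,…,2)) = 0. -/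
/-!
Since `A` only connects a coloring to itself and to its single-site flips, and both its entries
and the vector `v` depend on a coloring only through `k = #₁m`, the row of `A v` at `m` collapses
to `k (n - k) (ρ g(k) + (g(k-1) + g(k+1)) / 2)` for `g(x) = sin (λ x) / sin (λ n)`. The sine is an
eigenfunction of the discrete Laplacian, `(sin (λ(x-1)) + sin (λ(x+1))) / 2 = cos λ · sin (λ x)`,
and `cos λ = -ρ` kills the bracket. The bound `ρ + cos (π/n) < 0` gives `0 < λ n < π`, so the
normalization `sin (λ n)` does not vanish.
-/

open Finset Real

/-- `m` with the `i`-th color flipped. -/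
def flipAt {n : ℕ} (m : Fin n → Fin 2) (i : Fin n) : Fin n → Fin 2 :=
  Function.update m i (if m i = 0 then 1 else 0)

variable {n : ℕ}

local notation "#₁" m:max => Finset.card (Finset.filter (fun i => m i = 0) Finset.univ)

lemma flipAt_apply_self (m : Fin n → Fin 2) (i : Fin n) :
    flipAt m i i = if m i = 0 then 1 else 0 := by
  simp [flipAt]

lemma flipAt_apply_of_ne (m : Fin n → Fin 2) {i j : Fin n} (h : j ≠ i) :
    flipAt m i j = m j :=
  Function.update_of_ne h _ _

lemma flipAt_apply_self_ne (m : Fin n → Fin 2) (i : Fin n) : flipAt m i i ≠ m i := by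
  rw [flipAt_apply_self]; split_ifs <;> omega

lemma flipAt_ne_self (m : Fin n → Fin 2) (i : Fin n) : flipAt m i ≠ m :=
  fun h => flipAt_apply_self_ne m i (congrFun h i)

lemma flipAt_injective (m : Fin n → Fin 2) : Function.Injective (flipAt m) := by
  intro i j h
  by_contra hij
  have := congrFun h i
  rw [flipAt_apply_of_ne m hij] at this
  exact flipAt_apply_self_ne m i this

lemma card_filter_flipAt_eq_zero (m : Fin n → Fin 2) (i : Fin n) :
    (#₁ (flipAt m i) : ℝ) = #₁ m + if m i = 0 then -1 else 1 := by
  simp only [card_filter, Nat.cast_sum, Nat.cast_ite, Nat.cast_one, Nat.cast_zero]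
  rw [← add_sum_erase _ _ (mem_univ i), ← add_sum_erase _ (fun j => if m j = 0 then (1 : ℝ) else 0)
    (mem_univ i), sum_congr rfl fun j hj => by rw [flipAt_apply_of_ne m (ne_of_mem_erase hj)],
    flipAt_apply_self]
  split_ifs <;> first | omega | ring

lemma sum_ite_eq_zero (m : Fin n → Fin 2) (a b : ℝ) :
    ∑ i, (if m i = 0 then a else b) = #₁ m * a + (n - #₁ m) * b := by
  have hcard : (#₁ m : ℝ) + #{i | ¬m i = 0} = n := by
    exact_mod_cast (card_filter_add_card_filter_not (s := univ) (fun i => m i = 0)).trans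
      (card_fin n)
  rw [sum_ite, sum_const, sum_const, nsmul_eq_mul, nsmul_eq_mul, ← hcard]
  ring

lemma sum_ite_ne (m : Fin n → Fin 2) (i : Fin n) :
    ∑ j, (if m i ≠ m j then (1 : ℝ) else 0) =
      if m i = 0 then (n : ℝ) - #₁ m else (#₁ m : ℝ) := by
  have hsummand : ∀ j, (if m i ≠ m j then (1 : ℝ) else 0) =
      if m j = 0 then (if m i = 0 then 0 else 1) else (if m i = 0 then 1 else 0) := by
    intro j
    split_ifs <;> first | rfl | omega
  rw [sum_congr rfl fun j _ => hsummand j, sum_ite_eq_zero]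
  split_ifs <;> ring

section Dynamics

variable {ρ : ℝ} {A : Matrix (Fin n → Fin 2) (Fin n → Fin 2) ℝ}

lemma mulVec_apply_eq_diag_add_sum_flipAt
    (hA_other : ∀ m m', m' ≠ m → (∀ i, m' ≠ flipAt m i) → A m m' = 0)
    (v : (Fin n → Fin 2) → ℝ) (m : Fin n → Fin 2) :
    A.mulVec v m = A m m * v m + ∑ i, A m (flipAt m i) * v (flipAt m i) := by
  have hm : m ∉ univ.image (flipAt m) := by
    simpa using fun i => flipAt_ne_self m i
  rw [Matrix.mulVec, dotProduct, ← sum_subset (subset_univ (insert m (univ.image (flipAt m)))),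
    sum_insert hm, sum_image fun i _ j _ h => flipAt_injective m h]
  intro m' _ hm'
  simp only [mem_insert, mem_image, mem_univ, true_and, not_or, not_exists] at hm'
  rw [hA_other m m' hm'.1 fun i h => hm'.2 i h.symm, zero_mul]

theorem mulVec_comp_card_apply
    (hA_diag : ∀ m, A m m = (ρ / 2) * ∑ i : Fin n, ∑ j : Fin n,
        (if m i ≠ m j then (1 : ℝ) else 0))
    (hA_flip : ∀ m i, A m (flipAt m i) = (1 / 2) * ∑ j : Fin n,
        (if m i ≠ m j then (1 : ℝ) else 0))
    (hA_other : ∀ m m', m' ≠ m → (∀ i, m' ≠ flipAt m i) → A m m' = 0)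
    (g : ℝ → ℝ) (m : Fin n → Fin 2) :
    A.mulVec (fun m' => g (#₁ m')) m =
      #₁ m * (n - #₁ m) * (ρ * g (#₁ m) + (g (#₁ m - 1) + g (#₁ m + 1)) / 2) := by
  rw [mulVec_apply_eq_diag_add_sum_flipAt hA_other, hA_diag]
  simp only [hA_flip, sum_ite_ne, card_filter_flipAt_eq_zero]
  set k : ℝ := (#₁ m : ℝ)
  have hflip : ∀ i, 1 / 2 * (if m i = 0 then n - k else k) * g (k + if m i = 0 then -1 else 1) =
      if m i = 0 then (n - k) * g (k - 1) / 2 else k * g (k + 1) / 2 := by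
    intro i
    split_ifs <;> ring_nf
  simp only [hflip, sum_ite_eq_zero]
  ring

end Dynamics

lemma sin_mul_sub_one_add_sin_mul_add_one (lam x : ℝ) :
    sin (lam * (x - 1)) + sin (lam * (x + 1)) = 2 * cos lam * sin (lam * x) := by
  rw [mul_sub, mul_add, mul_one, sin_sub, sin_add]
  ring

lemma arccos_lt_pi_div {x : ℝ} (hn : 1 ≤ n) (hx : cos (π / n) < x) (hx₁ : x ≤ 1) :
    arccos x < π / n := by
  have hπn : 0 ≤ π / n := by positivity
  calc arccos x < arccos (cos (π / n)) := arccos_lt_arccos (neg_one_le_cos _) hx hx₁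
    _ = π / n := arccos_cos hπn (div_le_self pi_pos.le (by exact_mod_cast hn))

/-- Colorings are modelled as `Fin n → Fin 2`, with color 1 ↦ `0` and color 2 ↦ `1`. -/
theorem sine_vector_in_kernel
    (n : ℕ) (hn : 2 ≤ n) (ρ : ℝ) (hρ₁ : -1 < ρ) (hρ₂ : ρ < 0)
    (hcrit : ρ + Real.cos (π / n) < 0)
    (lam : ℝ) (hlam : lam = Real.arccos (-ρ))
    (A : Matrix (Fin n → Fin 2) (Fin n → Fin 2) ℝ)
    (hA_diag : ∀ m, A m m = (ρ / 2) * ∑ i : Fin n, ∑ j : Fin n,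
        (if m i ≠ m j then (1 : ℝ) else 0))
    (hA_flip : ∀ m i, A m (flipAt m i) = (1 / 2) * ∑ j : Fin n,
        (if m i ≠ m j then (1 : ℝ) else 0))
    (hA_other : ∀ m m', m' ≠ m → (∀ i, m' ≠ flipAt m i) → A m m' = 0)
    (v : (Fin n → Fin 2) → ℝ)
    (hv : ∀ m, v m = Real.sin (lam * (Finset.univ.filter (fun i => m i = 0)).card)
        / Real.sin (lam * n)) :
    A.mulVec v = 0 ∧ v (fun _ => 0) = 1 ∧ v (fun _ => 1) = 0 := by
  obtain rfl : v = fun m => sin (lam * #₁ m) / sin (lam * n) := funext hv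
  have hcos : cos lam = -ρ := hlam ▸ cos_arccos (by linarith) (by linarith)
  have hlam_pos : 0 < lam := hlam ▸ arccos_pos.mpr (by linarith)
  have hlamn : lam * n < π := by
    rw [← lt_div_iff₀ (by positivity), hlam]
    exact arccos_lt_pi_div (by omega) (by linarith) (by linarith)
  have hsin : sin (lam * n) ≠ 0 := (sin_pos_of_pos_of_lt_pi (by positivity) hlamn).ne'
  refine ⟨funext fun m => ?_, by simp [hsin], by simp⟩
  refine (mulVec_comp_card_apply hA_diag hA_flip hA_other
    (fun x => sin (lam * x) / sin (lam * n)) m).trans ?_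
  rw [← add_div, sin_mul_sub_one_add_sin_mul_add_one, hcos, Pi.zero_apply]
  ring
end
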